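/- arXiv:2602.20922 — 5 statements merged into one kernel-verified Lean document; each statement's English description precedes it below -/
import Mathlib

section
/- Let g ∈ ℂ[x₁,…,xₙ] and w ∈ ℂⁿ. Suppose the derivation δ = Σᵢ wᵢ xᵢ ∂ᵢ satisfies δ • g = λ g for some λ ∈ ℂ (i.e. g is w-quasi-homogeneous of w-degree λ). If g = g₁ · g₂ is a factorization, with g₁, g₂ each nonzero, then there exist λ₁, λ₂ ∈ ℂ with λ₁ + λ₂ = λ such that δ • gᵢ = λᵢ gᵢ for i = 1,2. -/
/-!
The operator `δ` multiplies the monomial `x^d` by its weight `∑ dᵢ wᵢ`, so `δ • g = λ g` says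
exactly that `g` is weighted homogeneous of weight `λ`. Order the weights (ℂ embeds additively in
the lexicographically ordered `ℝ ×ₗ ℝ`). The top-weight component of `g₁ g₂` is the product of the
top-weight components of `g₁` and `g₂`, hence nonzero over a domain, and likewise at the bottom;
so top₁ + top₂ = λ = bottom₁ + bottom₂, which forces top = bottom for each factor.
-/

open Finsupp

namespace Finsupp

theorem map_weight {σ M N : Type*} [AddCommMonoid M] [AddCommMonoid N] (f : M →+ N)
    (w : σ → M) (d : σ →₀ ℕ) : f (weight w d) = weight (f ∘ w) d := by
  simp [weight_apply, map_finsuppSum]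

end Finsupp

namespace MvPolynomial

variable {R σ M : Type*}

section EulerOperator

theorem coeff_X_mul_pderiv [CommSemiring R] (i : σ) (p : MvPolynomial σ R) (d : σ →₀ ℕ) :
    coeff d (X i * pderiv i p) = d i * coeff d p := by
  classical
  induction p using MvPolynomial.induction_on' with
  | monomial e r =>
    rw [X_mul_pderiv_monomial, coeff_smul, coeff_monomial]
    split_ifs with h
    · rw [h, nsmul_eq_mul]
    · rw [smul_zero, mul_zero]
  | add p q hp hq => rw [map_add, mul_add, coeff_add, coeff_add, hp, hq, mul_add]

variable [Fintype σ]

theorem coeff_sum_C_mul_X_mul_pderiv [CommSemiring R] (w : σ → R) (p : MvPolynomial σ R)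
    (d : σ →₀ ℕ) :
    coeff d (∑ i, C (w i) * X i * pderiv i p) = weight w d * coeff d p := by
  simp only [coeff_sum, mul_assoc, coeff_C_mul, coeff_X_mul_pderiv, weight_eq_sum, nsmul_eq_mul,
    Finset.sum_mul]
  exact Finset.sum_congr rfl fun i _ => by ring

theorem sum_C_mul_X_mul_pderiv_eq_C_mul_iff [CommRing R] [NoZeroDivisors R]
    (w : σ → R) (p : MvPolynomial σ R) (c : R) :
    ∑ i, C (w i) * X i * pderiv i p = C c * p ↔ IsWeightedHomogeneous w p c := by
  refine ⟨fun h d hd => ?_, fun h => ?_⟩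
  · have hcoeff := congrArg (coeff d) h
    rw [coeff_sum_C_mul_X_mul_pderiv, coeff_C_mul] at hcoeff
    exact mul_right_cancel₀ hd hcoeff
  · ext d
    rw [coeff_sum_C_mul_X_mul_pderiv, coeff_C_mul]
    by_cases hd : coeff d p = 0
    · rw [hd, mul_zero, mul_zero]
    · rw [h hd]

end EulerOperator

variable [CommSemiring R] [AddCommMonoid M] {w : σ → M} {φ ψ : MvPolynomial σ R}

theorem isWeightedHomogeneous_comp_iff {N : Type*} [AddCommMonoid N] {f : M →+ N}
    (hf : Function.Injective f) {m : M} :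
    IsWeightedHomogeneous (f ∘ w) φ (f m) ↔ IsWeightedHomogeneous w φ m := by
  simp only [IsWeightedHomogeneous, ← map_weight, hf.eq_iff]

theorem weightedHomogeneousComponent_ne_zero_of_mem_support {d : σ →₀ ℕ} (hd : d ∈ φ.support) :
    weightedHomogeneousComponent w (weight w d) φ ≠ 0 := by
  classical
  intro h
  have hcoeff := congrArg (coeff d) h
  rw [coeff_weightedHomogeneousComponent, if_pos rfl, coeff_zero] at hcoeff
  exact mem_support_iff.mp hd hcoeff

section OrderedWeights

variable [PartialOrder M] [IsOrderedCancelAddMonoid M]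

theorem weightedHomogeneousComponent_mul_of_forall_le {a b : M}
    (hφ : ∀ d ∈ φ.support, weight w d ≤ a) (hψ : ∀ d ∈ ψ.support, weight w d ≤ b) :
    weightedHomogeneousComponent w (a + b) (φ * ψ) =
      weightedHomogeneousComponent w a φ * weightedHomogeneousComponent w b ψ := by
  classical
  ext d
  rw [coeff_weightedHomogeneousComponent]
  split_ifs with hd
  · rw [coeff_mul, coeff_mul]
    refine Finset.sum_congr rfl fun x hx => ?_
    rw [coeff_weightedHomogeneousComponent, coeff_weightedHomogeneousComponent]
    by_cases hx₁ : coeff x.1 φ = 0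
    · simp [hx₁]
    by_cases hx₂ : coeff x.2 ψ = 0
    · simp [hx₂]
    have hsum : weight w x.1 + weight w x.2 = a + b := by
      rw [← map_add, Finset.HasAntidiagonal.mem_antidiagonal.mp hx, hd]
    obtain ⟨rfl, rfl⟩ := (add_eq_add_iff_eq_and_eq (hφ _ (mem_support_iff.mpr hx₁))
      (hψ _ (mem_support_iff.mpr hx₂))).mp hsum
    rw [if_pos rfl, if_pos rfl]
  · exact (((weightedHomogeneousComponent_isWeightedHomogeneous a φ).mul
      (weightedHomogeneousComponent_isWeightedHomogeneous b ψ)).coeff_eq_zero d hd).symm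

theorem IsWeightedHomogeneous.weight_add_weight_eq_of_forall_le [NoZeroDivisors R] {m : M}
    (h : IsWeightedHomogeneous w (φ * ψ) m) {a b : σ →₀ ℕ} (ha : a ∈ φ.support)
    (hb : b ∈ ψ.support) (haφ : ∀ d ∈ φ.support, weight w d ≤ weight w a)
    (hbψ : ∀ d ∈ ψ.support, weight w d ≤ weight w b) :
    weight w a + weight w b = m := by
  by_contra hne
  apply mul_ne_zero (weightedHomogeneousComponent_ne_zero_of_mem_support (w := w) ha)
    (weightedHomogeneousComponent_ne_zero_of_mem_support (w := w) hb)
  rw [← weightedHomogeneousComponent_mul_of_forall_le haφ hbψ]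
  exact h.weightedHomogeneousComponent_ne _ hne

end OrderedWeights

theorem IsWeightedHomogeneous.exists_of_mul [NoZeroDivisors R] [LinearOrder M]
    [IsOrderedCancelAddMonoid M] {m : M} (h : IsWeightedHomogeneous w (φ * ψ) m)
    (hφ : φ ≠ 0) (hψ : ψ ≠ 0) :
    ∃ m₁ m₂, m₁ + m₂ = m ∧ IsWeightedHomogeneous w φ m₁ ∧ IsWeightedHomogeneous w ψ m₂ := by
  obtain ⟨a₁, ha₁, hmax₁⟩ := φ.support.exists_max_image (weight w) (support_nonempty.mpr hφ)
  obtain ⟨a₂, ha₂, hmax₂⟩ := ψ.support.exists_max_image (weight w) (support_nonempty.mpr hψ)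
  obtain ⟨b₁, hb₁, hmin₁⟩ := φ.support.exists_min_image (weight w) (support_nonempty.mpr hφ)
  obtain ⟨b₂, hb₂, hmin₂⟩ := ψ.support.exists_min_image (weight w) (support_nonempty.mpr hψ)
  have htop := h.weight_add_weight_eq_of_forall_le ha₁ ha₂ hmax₁ hmax₂
  -- the bottom weights are the top weights for the reversed order on `M`
  have h' : IsWeightedHomogeneous (OrderDual.toDual ∘ w) (φ * ψ) (OrderDual.toDual m) := h
  have hbot := h'.weight_add_weight_eq_of_forall_le hb₁ hb₂ hmin₁ hmin₂
  obtain ⟨hφeq, hψeq⟩ := (add_eq_add_iff_eq_and_eq (hmin₁ a₁ ha₁) (hmin₂ a₂ ha₂)).mp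
    (hbot.trans htop.symm)
  refine ⟨weight w a₁, weight w a₂, htop, fun d hd => ?_, fun d hd => ?_⟩
  · exact le_antisymm (hmax₁ d (mem_support_iff.mpr hd)) (hφeq ▸ hmin₁ d (mem_support_iff.mpr hd))
  · exact le_antisymm (hmax₂ d (mem_support_iff.mpr hd)) (hψeq ▸ hmin₂ d (mem_support_iff.mpr hd))

end MvPolynomial

open MvPolynomial

/-- If `δ = ∑ i, w i • x i ∂ i` satisfies `δ • (g₁ * g₂) = λ • (g₁ * g₂)` with
`g₁, g₂` nonzero, then there are `λ₁, λ₂` with `λ₁ + λ₂ = λ`, `δ • g₁ = λ₁ g₁`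
and `δ • g₂ = λ₂ g₂`. -/
theorem quasi_homogeneous_of_factor (n : ℕ) (w : Fin n → ℂ)
    (g₁ g₂ : MvPolynomial (Fin n) ℂ) (h₁ : g₁ ≠ 0) (h₂ : g₂ ≠ 0) (lam : ℂ)
    (h : (∑ i, C (w i) * X i * pderiv i (g₁ * g₂)) = C lam * (g₁ * g₂)) :
    ∃ lam₁ lam₂ : ℂ, lam₁ + lam₂ = lam ∧
      (∑ i, C (w i) * X i * pderiv i g₁) = C lam₁ * g₁ ∧
      (∑ i, C (w i) * X i * pderiv i g₂) = C lam₂ * g₂ := by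
  let e : ℂ ≃+ Lex (ℝ × ℝ) := Complex.equivRealProdAddHom.trans (toLexAddEquiv _)
  have transfer {φ : MvPolynomial (Fin n) ℂ} {m : ℂ} :
      IsWeightedHomogeneous (e ∘ w) φ (e m) ↔ IsWeightedHomogeneous w φ m :=
    isWeightedHomogeneous_comp_iff (f := e.toAddMonoidHom) e.injective
  rw [sum_C_mul_X_mul_pderiv_eq_C_mul_iff, ← transfer] at h
  obtain ⟨m₁, m₂, hm, hg₁, hg₂⟩ := h.exists_of_mul h₁ h₂
  rw [← e.apply_symm_apply m₁, transfer] at hg₁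
  rw [← e.apply_symm_apply m₂, transfer] at hg₂
  refine ⟨e.symm m₁, e.symm m₂, ?_, ?_, ?_⟩
  · rw [← map_add, hm, e.symm_apply_apply]
  · rwa [sum_C_mul_X_mul_pderiv_eq_C_mul_iff]
  · rwa [sum_C_mul_X_mul_pderiv_eq_C_mul_iff]
end

section
/- Let d ≥ 1, 1 ≤ r ≤ d−1, and m = gcd(d,r). Let h ∈ ℂ[x,y,z] be reduced homogeneous of degree d whose monomial support contains y^d and x^r z^{d−r}, and such that every monomial x^a y^b z^c in supp(h) satisfies (r−d)a + r c = 0 (after dividing by m: ((r−d)/m)a + (r/m)c = 0). Then there exist λ ∈ ℂ* and pairwise distinct c₁,…,c_m ∈ ℂ* such that h = λ · Π_{q=1}^{m} ( y^{d/m} + c_q x^{r/m} z^{(d−r)/m} ), and each factor y^{d/m} + c_q x^{r/m} z^{(d−r)/m} is irreducible in ℂ[x,y,z]. -/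
/-!
Homogeneity and the line condition force every monomial of `h` to be `V ^ k * U ^ l` with
`k + l = m`, where `V = y ^ (d/m)` and `U = x ^ (r/m) * z ^ ((d-r)/m)`. Hence `h` is the
homogenization of a univariate polynomial of degree `m`, evaluated at `(V, U)`. Over `ℂ` that
polynomial splits, so `h = λ ∏ (V - a U)`; the roots `a` are nonzero because `x^r z^(d-r)` occurs
in `h`, and distinct because `h` is squarefree.

For irreducibility of `y ^ d' + c x ^ r' z ^ g'` with `d' = r' + g'` coprime to `r'`: grading by a
new variable `T` (`X i ↦ T ^ (w i) X i`) shows that a factor of a `w`-homogeneous polynomial over a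
domain is `w`-homogeneous, since the top and bottom `T`-degrees both add. So a proper factor is
homogeneous both for the total degree and for the weights `(d', r', 0)`; by coprimality such a
polynomial of degree `< d'` is a single monomial, and a product of two monomials is not a binomial.
-/

open MvPolynomial Finset

namespace MvPolynomial

variable {σ R : Type*} [CommSemiring R]

noncomputable def weightedGrading (w : σ → ℕ) :
    MvPolynomial σ R →ₐ[R] Polynomial (MvPolynomial σ R) :=
  aeval fun i => Polynomial.monomial (w i) (X i)

lemma weightedGrading_monomial (w : σ → ℕ) (e : σ →₀ ℕ) (c : R) :
    weightedGrading w (monomial e c) =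
      Polynomial.monomial (Finsupp.weight w e) (monomial e c) := by
  induction e using Finsupp.induction generalizing c with
  | zero => simp [weightedGrading, Polynomial.C_eq_algebraMap]
  | single_add i k e _ _ ih =>
    rw [monomial_single_add, map_mul, ih, map_pow, weightedGrading, aeval_X,
      Polynomial.monomial_pow, Polynomial.monomial_mul_monomial, map_add, Finsupp.weight_single,
      smul_eq_mul, mul_comm]

lemma coeff_weightedGrading (w : σ → ℕ) (p : MvPolynomial σ R) (n : ℕ) :
    (weightedGrading w p).coeff n = weightedHomogeneousComponent w n p := by
  induction p using MvPolynomial.induction_on' with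
  | monomial e c =>
    rw [weightedGrading_monomial, Polynomial.coeff_monomial]
    split_ifs with h
    · exact (isWeightedHomogeneous_monomial w e c h).weightedHomogeneousComponent_same.symm
    · exact ((isWeightedHomogeneous_monomial w e c rfl).weightedHomogeneousComponent_ne n
        (Ne.symm h)).symm
  | add p q hp hq => simp [hp, hq]

lemma IsWeightedHomogeneous.weightedGrading_eq {w : σ → ℕ} {p : MvPolynomial σ R} {n : ℕ}
    (hp : IsWeightedHomogeneous w p n) : weightedGrading w p = Polynomial.monomial n p := by
  ext1 j
  rw [coeff_weightedGrading, Polynomial.coeff_monomial]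
  split_ifs with h
  · exact h ▸ hp.weightedHomogeneousComponent_same
  · exact hp.weightedHomogeneousComponent_ne j (Ne.symm h)

lemma weight_mem_Icc_weightedGrading (w : σ → ℕ) {p : MvPolynomial σ R} {e : σ →₀ ℕ}
    (he : e ∈ p.support) : Finsupp.weight w e ∈
      Set.Icc (weightedGrading w p).natTrailingDegree (weightedGrading w p).natDegree := by
  have hcoeff : (weightedGrading w p).coeff (Finsupp.weight w e) ≠ 0 := by
    rw [coeff_weightedGrading]
    intro h0
    have := congrArg (coeff e) h0
    rw [coeff_weightedHomogeneousComponent, if_pos rfl, coeff_zero] at this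
    exact mem_support_iff.mp he this
  exact ⟨Polynomial.natTrailingDegree_le_of_ne_zero hcoeff,
    Polynomial.le_natDegree_of_ne_zero hcoeff⟩

lemma IsWeightedHomogeneous.exists_of_mul_left [NoZeroDivisors R] {w : σ → ℕ}
    {p q : MvPolynomial σ R} {n : ℕ} (hpq : IsWeightedHomogeneous w (p * q) n)
    (hpq0 : p * q ≠ 0) : ∃ k, IsWeightedHomogeneous w p k := by
  have hψ := hpq.weightedGrading_eq
  rw [map_mul] at hψ
  have hPQ : weightedGrading w p * weightedGrading w q ≠ 0 := by simpa [hψ] using hpq0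
  have hP := left_ne_zero_of_mul hPQ
  have hQ := right_ne_zero_of_mul hPQ
  have hdeg := congrArg Polynomial.natDegree hψ
  have htrail := congrArg Polynomial.natTrailingDegree hψ
  rw [Polynomial.natDegree_mul hP hQ, Polynomial.natDegree_monomial_eq n hpq0] at hdeg
  rw [Polynomial.natTrailingDegree_mul hP hQ, Polynomial.natTrailingDegree_monomial hpq0] at htrail
  have := (weightedGrading w p).natTrailingDegree_le_natDegree
  have := (weightedGrading w q).natTrailingDegree_le_natDegree
  refine ⟨(weightedGrading w p).natDegree, fun {e} he => ?_⟩
  have := weight_mem_Icc_weightedGrading w (mem_support_iff.mpr he)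
  simp only [Set.mem_Icc] at this
  omega

lemma IsHomogeneous.isUnit_of_degree_zero {K : Type*} [Field K] {p : MvPolynomial σ K}
    (hp : p.IsHomogeneous 0) (hp0 : p ≠ 0) : IsUnit p := by
  have hC := totalDegree_eq_zero_iff_eq_C.mp (hp.totalDegree hp0)
  rw [hC] at hp0 ⊢
  exact (isUnit_iff_ne_zero.mpr fun h => hp0 (by rw [h, map_zero])).map C

lemma support_mul_subsingleton {p q : MvPolynomial σ R}
    (hp : (p.support : Set (σ →₀ ℕ)).Subsingleton)
    (hq : (q.support : Set (σ →₀ ℕ)).Subsingleton) :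
    ((p * q).support : Set (σ →₀ ℕ)).Subsingleton := by
  classical
  intro a ha b hb
  obtain ⟨a₁, ha₁, a₂, ha₂, rfl⟩ := Finset.mem_add.mp (support_mul p q ha)
  obtain ⟨b₁, hb₁, b₂, hb₂, rfl⟩ := Finset.mem_add.mp (support_mul p q hb)
  rw [hp ha₁ hb₁, hq ha₂ hb₂]

end MvPolynomial

lemma Finsupp.weight_fin_three (w : Fin 3 → ℕ) (J : Fin 3 →₀ ℕ) :
    Finsupp.weight w J = J 0 * w 0 + J 1 * w 1 + J 2 * w 2 := by
  simp [Finsupp.weight_apply, Finsupp.sum_fintype, Fin.sum_univ_three]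

lemma support_subsingleton_of_isHomogeneous_of_isWeightedHomogeneous {R : Type*}
    [CommSemiring R] {d r k n : ℕ} (hcop : d.Coprime r) (hk : k < d)
    {p : MvPolynomial (Fin 3) R} (hdeg : p.IsHomogeneous k)
    (hwt : p.IsWeightedHomogeneous ![d, r, 0] n) :
    (p.support : Set (Fin 3 →₀ ℕ)).Subsingleton := by
  intro J hJ J' hJ'
  have hJk := hdeg (mem_support_iff.mp hJ)
  have hJ'k := hdeg (mem_support_iff.mp hJ')
  have hJn := hwt (mem_support_iff.mp hJ)
  have hJ'n := hwt (mem_support_iff.mp hJ')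
  simp only [Finsupp.weight_fin_three, Pi.one_apply, Matrix.cons_val, mul_one, mul_zero,
    add_zero] at hJk hJ'k hJn hJ'n
  have hZ : (J 0 * d + J 1 * r : ℤ) = J' 0 * d + J' 1 * r := by exact_mod_cast hJn.trans hJ'n.symm
  have hdvd : (d : ℤ) ∣ (J 1 : ℤ) - J' 1 :=
    (Nat.isCoprime_iff_coprime.mpr hcop).dvd_of_dvd_mul_left ⟨J' 0 - J 0, by linear_combination hZ⟩
  -- the `y`-exponents differ by a multiple of `d` but by less than `d`
  have h1 : J 1 = J' 1 := by
    have := Int.eq_zero_of_abs_lt_dvd hdvd (abs_sub_lt_iff.mpr ⟨by omega, by omega⟩)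
    omega
  have h0 : J 0 = J' 0 :=
    Nat.eq_of_mul_eq_mul_right (m := d) (by omega) (by rw [h1] at hJn; linarith)
  have h2 : J 2 = J' 2 := by omega
  ext i
  fin_cases i <;> assumption

lemma irreducible_of_isHomogeneous_of_isWeightedHomogeneous {K : Type*} [Field K] {d r n : ℕ}
    (hcop : d.Coprime r) {f : MvPolynomial (Fin 3) K} (hnu : ¬IsUnit f) (hdeg : f.IsHomogeneous d)
    (hwt : f.IsWeightedHomogeneous ![d, r, 0] n)
    (hsupp : ¬(f.support : Set (Fin 3 →₀ ℕ)).Subsingleton) : Irreducible f := by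
  refine ⟨hnu, fun p q hpq => ?_⟩
  subst hpq
  have hf0 : p * q ≠ 0 := fun h => hsupp (by simp [h])
  obtain ⟨k, hpk⟩ : ∃ k, p.IsHomogeneous k := hdeg.exists_of_mul_left hf0
  obtain ⟨l, hql⟩ : ∃ l, q.IsHomogeneous l :=
    (mul_comm p q ▸ hdeg).exists_of_mul_left (mul_comm p q ▸ hf0)
  obtain ⟨_, hpw⟩ := hwt.exists_of_mul_left hf0
  obtain ⟨_, hqw⟩ := (mul_comm p q ▸ hwt).exists_of_mul_left (mul_comm p q ▸ hf0)
  have hkl : k + l = d := (hpk.mul hql).inj_right hdeg hf0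
  rcases Nat.eq_zero_or_pos k with rfl | hk
  · exact .inl (hpk.isUnit_of_degree_zero (left_ne_zero_of_mul hf0))
  rcases Nat.eq_zero_or_pos l with rfl | hl
  · exact .inr (hql.isUnit_of_degree_zero (right_ne_zero_of_mul hf0))
  exact absurd (support_mul_subsingleton
    (support_subsingleton_of_isHomogeneous_of_isWeightedHomogeneous hcop (by omega) hpk hpw)
    (support_subsingleton_of_isHomogeneous_of_isWeightedHomogeneous hcop (by omega) hql hqw)) hsupp

theorem irreducible_X_pow_add_C_mul_X_pow_mul_X_pow {K : Type*} [Field K] {d r g : ℕ}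
    (hd : d = r + g) (hd0 : 0 < d) (hcop : d.Coprime r) {c : K} (hc : c ≠ 0) :
    Irreducible (X 1 ^ d + C c * X 0 ^ r * X 2 ^ g : MvPolynomial (Fin 3) K) := by
  have hnu : ¬IsUnit (X 1 ^ d + C c * X 0 ^ r * X 2 ^ g : MvPolynomial (Fin 3) K) := by
    intro hu
    have := hu.map (eval 0)
    rcases (by omega : r ≠ 0 ∨ g ≠ 0) with hr | hg
    · simp [hd0.ne', hr] at this
    · simp [hd0.ne', hg] at this
  set e₁ : Fin 3 →₀ ℕ := Finsupp.single 1 d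
  set e₂ : Fin 3 →₀ ℕ := Finsupp.single 0 r + Finsupp.single 2 g
  have hf : (X 1 ^ d + C c * X 0 ^ r * X 2 ^ g : MvPolynomial (Fin 3) K) =
      monomial e₁ 1 + monomial e₂ c := by
    simp [e₁, e₂, X_pow_eq_monomial, C_mul_monomial, monomial_mul]
  have he : e₁ ≠ e₂ := by
    intro h
    simpa [e₁, e₂, hd0.ne'] using congrArg (· 1) h
  rw [hf] at hnu ⊢
  refine irreducible_of_isHomogeneous_of_isWeightedHomogeneous (n := d * r) hcop hnu
    ((isHomogeneous_monomial _ (by simp [e₁])).add (isHomogeneous_monomial _ (by simp [e₂, hd])))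
    ((isWeightedHomogeneous_monomial _ _ _ (by simp [e₁, Finsupp.weight_fin_three])).add
      (isWeightedHomogeneous_monomial _ _ _ (by simp [e₂, Finsupp.weight_fin_three, mul_comm])))
    fun hsub => he (hsub ?_ ?_)
  · simp [coeff_monomial, he.symm]
  · simp [coeff_monomial, he, hc]

namespace Polynomial

variable {K : Type*} [Field K]

lemma homogenize_multiset_prod_X_sub_C (s : Multiset K) :
    ((s.map fun a => X - C a).prod).homogenize (Multiset.card s) =
      (s.map fun a => MvPolynomial.X 0 - MvPolynomial.C a * MvPolynomial.X 1).prod := by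
  induction s using Multiset.induction_on with
  | empty => simp
  | cons a s ih =>
    rw [Multiset.map_cons, Multiset.prod_cons, Multiset.card_cons, add_comm,
      homogenize_mul _ _ (natDegree_X_sub_C_le a) (natDegree_multiset_prod_X_sub_C_eq_card s).le,
      ih, Multiset.map_cons, Multiset.prod_cons, homogenize_sub, homogenize_X one_ne_zero,
      homogenize_C]
    simp

lemma homogenize_natDegree_eq_C_leadingCoeff_mul_prod_roots [IsAlgClosed K] (P : K[X]) :
    P.homogenize P.natDegree = MvPolynomial.C P.leadingCoeff *
      (P.roots.map fun a => MvPolynomial.X 0 - MvPolynomial.C a * MvPolynomial.X 1).prod := by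
  have hcard := splits_iff_card_roots.mp (IsAlgClosed.splits P)
  calc P.homogenize P.natDegree =
        (C P.leadingCoeff * (P.roots.map fun a => X - C a).prod).homogenize
          (Multiset.card P.roots) := by
        rw [C_leadingCoeff_mul_prod_multiset_X_sub_C hcard, hcard]
    _ = _ := by rw [homogenize_C_mul, homogenize_multiset_prod_X_sub_C]

end Polynomial

lemma Multiset.nodup_of_squarefree_prod_map {α M : Type*} [CommMonoid M] {s : Multiset α}
    {f : α → M} (hf : ∀ a ∈ s, ¬IsUnit (f a)) (h : Squarefree (s.map f).prod) : s.Nodup := by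
  classical
  refine Multiset.nodup_iff_count_le_one.mpr fun a => ?_
  by_contra! h2
  have hdvd : f a * f a ∣ (s.map f).prod := by
    simpa [pow_two] using Multiset.prod_dvd_prod_of_le
      (Multiset.map_le_map (f := f) (Multiset.le_count_iff_replicate_le.mp h2))
  exact hf a (Multiset.count_pos.mp (by omega)) (h _ hdvd)

lemma Multiset.Nodup.exists_injective_prod_map_eq {α M : Type*} [CommMonoid M]
    {s : Multiset α} (hs : s.Nodup) {n : ℕ} (hn : Multiset.card s = n) (f : α → M) :
    ∃ c : Fin n → α, Function.Injective c ∧ (∀ q, c q ∈ s) ∧ (s.map f).prod = ∏ q, f (c q) := by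
  subst hn
  let t : Finset α := ⟨s, hs⟩
  refine ⟨fun q => t.equivFin.symm q, Subtype.val_injective.comp t.equivFin.symm.injective,
    fun q => (t.equivFin.symm q).2, ?_⟩
  calc (s.map f).prod = ∏ x : t, f x := (Finset.prod_coe_sort t f).symm
    _ = _ := (Equiv.prod_comp t.equivFin.symm _).symm

/-- The exponent of `(y ^ d) ^ k * (x ^ r * z ^ g) ^ l`, where `x, y, z = X 0, X 1, X 2`. -/
noncomputable def formExponent (d r g : ℕ) (kl : ℕ × ℕ) : Fin 3 →₀ ℕ :=
  Finsupp.single 0 (r * kl.2) + Finsupp.single 1 (d * kl.1) + Finsupp.single 2 (g * kl.2)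

lemma formExponent_injOn {d : ℕ} (r g m : ℕ) (hd : 0 < d) :
    Set.InjOn (formExponent d r g) (antidiagonal m) := by
  intro kl hkl kl' hkl' h
  exact (HasAntidiagonal.antidiagonal_congr hkl hkl').mpr
    (by simpa [formExponent, hd.ne'] using congrArg (· 1) h)

lemma exists_mem_antidiagonal_eq_formExponent {d r g m : ℕ} (hd : d = r + g)
    (hcop : d.Coprime r) (hr : 0 < r) {J : Fin 3 →₀ ℕ} (hdeg : J 0 + J 1 + J 2 = d * m)
    (hline : g * J 0 = r * J 2) : ∃ kl ∈ antidiagonal m, J = formExponent d r g kl := by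
  have hgr : g.Coprime r := Nat.coprime_self_add_left.mp (hd ▸ hcop)
  obtain ⟨l, h0⟩ : r ∣ J 0 := hgr.symm.dvd_of_dvd_mul_left ⟨J 2, hline⟩
  have h2 : J 2 = g * l := Nat.eq_of_mul_eq_mul_left hr (by rw [← hline, h0]; ring)
  have hl : d * l ≤ d * m := by rw [← hdeg, h0, h2, hd]; nlinarith
  have hlm : l ≤ m := Nat.le_of_mul_le_mul_left hl (by omega)
  have h1 : J 1 = d * (m - l) := by
    have : d * l = r * l + g * l := by rw [hd, add_mul]
    rw [Nat.mul_sub]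
    omega
  refine ⟨(m - l, l), by simp [hlm], ?_⟩
  ext i
  fin_cases i <;> simp [formExponent, h0, h1, h2]

section BinaryForm

variable {K : Type*} [Field K]

lemma aeval_monomial_eq_monomial_formExponent (d r g k l : ℕ) (c : K) :
    aeval ![X 1 ^ d, X 0 ^ r * X 2 ^ g] (monomial (fun₀ | 0 => k | 1 => l) c) =
      (monomial (formExponent d r g (k, l)) c : MvPolynomial (Fin 3) K) := by
  rw [aeval_monomial, Finsupp.prod_fintype _ _ (fun _ => pow_zero _)]
  simp [formExponent, Fin.prod_univ_two, X_pow_eq_monomial, monomial_pow, monomial_mul,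
    C_mul_monomial, add_assoc, add_left_comm, mul_comm]

lemma aeval_homogenize (d r g m : ℕ) (P : Polynomial K) :
    aeval ![X 1 ^ d, X 0 ^ r * X 2 ^ g] (P.homogenize m) =
      ∑ kl ∈ antidiagonal m,
        (monomial (formExponent d r g kl) (P.coeff kl.1) : MvPolynomial (Fin 3) K) := by
  simp only [Polynomial.homogenize, map_sum, aeval_monomial_eq_monomial_formExponent]

lemma eq_sum_monomial_formExponent {d : ℕ} (r g m : ℕ) (hd : 0 < d)
    {h : MvPolynomial (Fin 3) K}
    (hsupp : ∀ J ∈ h.support, ∃ kl ∈ antidiagonal m, J = formExponent d r g kl) :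
    h = ∑ kl ∈ antidiagonal m,
      monomial (formExponent d r g kl) (h.coeff (formExponent d r g kl)) := by
  ext J
  rw [coeff_sum]
  simp only [coeff_monomial]
  by_cases hJ : J ∈ h.support
  · obtain ⟨kl, hkl, rfl⟩ := hsupp J hJ
    rw [sum_eq_single_of_mem kl hkl fun kl' hkl' hne => if_neg fun h =>
      hne (formExponent_injOn r g m hd hkl' hkl h), if_pos rfl]
  · refine (notMem_support_iff.mp hJ).trans (sum_eq_zero fun kl _ => ?_).symm
    split_ifs with h
    · exact h ▸ notMem_support_iff.mp hJ
    · rfl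

lemma exists_eq_aeval_homogenize {d : ℕ} (r g m : ℕ) (hd : 0 < d) {h : MvPolynomial (Fin 3) K}
    (hsupp : ∀ J ∈ h.support, ∃ kl ∈ antidiagonal m, J = formExponent d r g kl) :
    ∃ P : Polynomial K, P.natDegree ≤ m ∧
      (∀ kl ∈ antidiagonal m, P.coeff kl.1 = h.coeff (formExponent d r g kl)) ∧
      h = aeval ![X 1 ^ d, X 0 ^ r * X 2 ^ g] (P.homogenize m) := by
  set P : Polynomial K :=
    ∑ kl ∈ antidiagonal m, Polynomial.monomial kl.1 (h.coeff (formExponent d r g kl))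
  have hP : ∀ kl ∈ antidiagonal m, P.coeff kl.1 = h.coeff (formExponent d r g kl) := by
    intro kl hkl
    rw [Polynomial.finsetSum_coeff, sum_eq_single_of_mem kl hkl fun kl' hkl' hne =>
      Polynomial.coeff_monomial_of_ne _ fun h =>
        hne ((HasAntidiagonal.antidiagonal_congr hkl' hkl).mpr h.symm),
      Polynomial.coeff_monomial_same]
  refine ⟨P, Polynomial.natDegree_sum_le_of_forall_le _ _ fun kl hkl =>
    (Polynomial.natDegree_monomial_le _).trans
      (Finset.HasAntidiagonal.antidiagonal.fst_le hkl), hP, ?_⟩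
  rw [aeval_homogenize, sum_congr rfl fun kl hkl => by rw [hP kl hkl]]
  exact eq_sum_monomial_formExponent r g m hd hsupp

theorem exists_eq_C_mul_prod_of_support_subset [IsAlgClosed K] {d r : ℕ} (g m : ℕ)
    (hd : 0 < d) (hr : 0 < r) {h : MvPolynomial (Fin 3) K} (hred : Squarefree h)
    (hsupp : ∀ J ∈ h.support, ∃ kl ∈ antidiagonal m, J = formExponent d r g kl)
    (hV : h.coeff (formExponent d r g (m, 0)) ≠ 0)
    (hU : h.coeff (formExponent d r g (0, m)) ≠ 0) :
    ∃ (lam : K) (c : Fin m → K), lam ≠ 0 ∧ (∀ q, c q ≠ 0) ∧ Function.Injective c ∧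
      h = C lam * ∏ q, (X 1 ^ d + C (c q) * X 0 ^ r * X 2 ^ g) := by
  obtain ⟨P, hPdeg, hPcoeff, rfl⟩ := exists_eq_aeval_homogenize r g m hd hsupp
  have hlead : P.coeff m ≠ 0 := hPcoeff (m, 0) (by simp) ▸ hV
  have hm : P.natDegree = m := le_antisymm hPdeg (Polynomial.le_natDegree_of_ne_zero hlead)
  have hroots : ∀ a ∈ P.roots, a ≠ 0 := by
    rintro a ha rfl
    exact (hPcoeff (0, m) (by simp) ▸ hU)
      (by rw [Polynomial.coeff_zero_eq_eval_zero]; exact Polynomial.isRoot_of_mem_roots ha)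
  set f : K → MvPolynomial (Fin 3) K := fun a => X 1 ^ d + C (-a) * X 0 ^ r * X 2 ^ g
  have hf : (aeval ![X 1 ^ d, X 0 ^ r * X 2 ^ g] ∘ fun a => X 0 - C a * X 1) = f := by
    funext a
    simp [f, sub_eq_add_neg, mul_assoc]
  have hfactor := Polynomial.homogenize_natDegree_eq_C_leadingCoeff_mul_prod_roots P
  rw [hm] at hfactor
  rw [hfactor, map_mul, aeval_C, map_multiset_prod, Multiset.map_map, hf] at hred ⊢
  have hnu : ∀ a, ¬IsUnit (f a) := by
    intro a hu
    have := hu.map (eval 0)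
    simp [f, hd.ne', hr.ne'] at this
  obtain ⟨c, hc, hcmem, hprod⟩ :=
    (Multiset.nodup_of_squarefree_prod_map (fun a _ => hnu a)
      hred.of_mul_right).exists_injective_prod_map_eq
      ((Polynomial.splits_iff_card_roots.mp (IsAlgClosed.splits P)).trans hm) f
  refine ⟨P.leadingCoeff, fun q => -c q, ?_, fun q => neg_ne_zero.mpr (hroots _ (hcmem q)),
    neg_injective.comp hc, ?_⟩
  · exact Polynomial.leadingCoeff_ne_zero.mpr fun h0 => hlead (by simp [h0])
  · rw [hprod]
    rfl

end BinaryForm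

lemma Nat.div_gcd_eq_div_gcd_add_sub_div_gcd {d r : ℕ} (hrd : r ≤ d) :
    d / d.gcd r = r / d.gcd r + (d - r) / d.gcd r := by
  rw [← Nat.add_div_of_dvd_right (Nat.gcd_dvd_right d r), Nat.add_sub_cancel' hrd]

lemma exists_mem_antidiagonal_gcd_eq_formExponent {d r : ℕ} (hr : 0 < r) (hrd : r ≤ d)
    {J : Fin 3 →₀ ℕ} (hdeg : J 0 + J 1 + J 2 = d)
    (hline : ((r : ℤ) - d) * J 0 + r * J 2 = 0) : ∃ kl ∈ antidiagonal (d.gcd r),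
      J = formExponent (d / d.gcd r) (r / d.gcd r) ((d - r) / d.gcd r) kl := by
  have hm : 0 < d.gcd r := Nat.gcd_pos_of_pos_right d hr
  have hrm : r / d.gcd r * d.gcd r = r := Nat.div_mul_cancel (Nat.gcd_dvd_right d r)
  have hgm : (d - r) / d.gcd r * d.gcd r = d - r :=
    Nat.div_mul_cancel (Nat.dvd_sub (Nat.gcd_dvd_left d r) (Nat.gcd_dvd_right d r))
  refine exists_mem_antidiagonal_eq_formExponent (Nat.div_gcd_eq_div_gcd_add_sub_div_gcd hrd)
    (Nat.coprime_div_gcd_div_gcd hm) (Nat.div_pos (Nat.gcd_le_right (m := d) hr) hm) ?_ ?_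
  · rwa [Nat.div_mul_cancel (Nat.gcd_dvd_left d r)]
  · refine Nat.eq_of_mul_eq_mul_right hm ?_
    rw [mul_right_comm, hgm, mul_right_comm, hrm]
    zify [hrd]
    linarith

/-- Let `h ∈ ℂ[x,y,z]` be reduced homogeneous of degree `d`, `1 ≤ r ≤ d−1`,
`m = gcd(d,r)`. Suppose `y^d` and `x^r z^{d−r}` appear in `h`, and every monomial
`x^a y^b z^c` of `h` satisfies `(r−d)a + rc = 0`. Then `h = λ ∏_{q=1}^m
(y^{d/m} + c_q x^{r/m} z^{(d−r)/m})` with `λ ≠ 0` and pairwise distinct nonzero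
`c_q`, each factor being irreducible. -/
theorem standard_form_factorization (d r : ℕ) (hd : 1 ≤ d) (hr1 : 1 ≤ r)
    (hr2 : r ≤ d - 1) (h : MvPolynomial (Fin 3) ℂ) (hhom : h.IsHomogeneous d)
    (hred : Squarefree h)
    (hy : h.coeff (Finsupp.single 1 d) ≠ 0)
    (hxz : h.coeff (Finsupp.single 0 r + Finsupp.single 2 (d - r)) ≠ 0)
    (hline : ∀ J ∈ h.support, ((r : ℤ) - (d : ℤ)) * (J 0 : ℤ) + (r : ℤ) * (J 2 : ℤ) = 0) :
    ∃ (lam : ℂ) (c : Fin (Nat.gcd d r) → ℂ), lam ≠ 0 ∧ (∀ q, c q ≠ 0) ∧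
      Function.Injective c ∧
      h = C lam * ∏ q, (X 1 ^ (d / Nat.gcd d r) +
        C (c q) * X 0 ^ (r / Nat.gcd d r) * X 2 ^ ((d - r) / Nat.gcd d r)) ∧
      ∀ q, Irreducible (X 1 ^ (d / Nat.gcd d r) +
        C (c q) * X 0 ^ (r / Nat.gcd d r) * X 2 ^ ((d - r) / Nat.gcd d r)
        : MvPolynomial (Fin 3) ℂ) := by
  set m := Nat.gcd d r
  have hm : 0 < m := Nat.gcd_pos_of_pos_left r hd
  have hrd : r ≤ d := by omega
  have hd' : 0 < d / m := Nat.div_pos (Nat.gcd_le_left r hd) hm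
  have hr' : 0 < r / m := Nat.div_pos (Nat.gcd_le_right (m := d) hr1) hm
  have hdm : d / m * m = d := Nat.div_mul_cancel (Nat.gcd_dvd_left d r)
  have hrm : r / m * m = r := Nat.div_mul_cancel (Nat.gcd_dvd_right d r)
  have hgm : (d - r) / m * m = d - r :=
    Nat.div_mul_cancel (Nat.dvd_sub (Nat.gcd_dvd_left d r) (Nat.gcd_dvd_right d r))
  have hsupp : ∀ J ∈ h.support, ∃ kl ∈ antidiagonal m,
      J = formExponent (d / m) (r / m) ((d - r) / m) kl := fun J hJ =>
    exists_mem_antidiagonal_gcd_eq_formExponent hr1 hrd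
      (by simpa [Finsupp.weight_fin_three] using hhom (mem_support_iff.mp hJ)) (hline J hJ)
  obtain ⟨lam, c, hlam, hc, hinj, hfac⟩ := exists_eq_C_mul_prod_of_support_subset _ m hd'
    hr' hred hsupp (by simpa [formExponent, hdm] using hy)
    (by simpa [formExponent, hrm, hgm] using hxz)
  exact ⟨lam, c, hlam, hc, hinj, hfac, fun q => irreducible_X_pow_add_C_mul_X_pow_mul_X_pow
    (Nat.div_gcd_eq_div_gcd_add_sub_div_gcd hrd) hd' (Nat.coprime_div_gcd_div_gcd hm) (hc q)⟩
end

section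
/- For coprime integers t > u ≥ 1 and c ∈ ℂ*, the polynomial y^t + c x^u z^{t−u} is irreducible in ℂ[x,y,z]. -/
/-!
Since `gcd(u, t) = 1`, one of `t`, `u` is odd; regard `y^t + c x^u z^(t-u)` as a polynomial in `y`
(if `t` is odd) or in `x` (if `t` is even, so `u` is odd) over `ℂ[other two variables]`. Either way
it has the shape `α X^n + q^m w` with `n` odd, `m` coprime to `n`, and `q` (the variable `x`,
resp. `y`) a prime dividing neither `α` nor `w`, and `α` coprime to `q^m w`. Gauss's lemma moves the question to the fraction
field, where the polynomial is a unit times `X^n - b` with `b` of `q`-adic valuation `m`. Such a `b`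
is not a `p`-th power for any prime `p ∣ n`, which for odd `n` makes `X^n - b` irreducible.
-/

open MvPolynomial

theorem Prime.dvd_of_pow_mul_eq_pow_mul_pow {R : Type*} [CommMonoidWithZero R] [IsCancelMulZero R]
    [WfDvdMonoid R] {q r s v w : R} {p m : ℕ} (hq : Prime q) (hp : p ≠ 0) (hv : ¬ q ∣ v)
    (hw : ¬ q ∣ w) (hs : s ≠ 0) (h : r ^ p * v = q ^ m * w * s ^ p) : p ∣ m := by
  have hw0 : w ≠ 0 := by rintro rfl; exact hw (dvd_zero q)
  have hr : r ≠ 0 := by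
    rintro rfl
    rw [zero_pow hp, zero_mul] at h
    exact mul_ne_zero (mul_ne_zero (pow_ne_zero _ hq.ne_zero) hw0) (pow_ne_zero _ hs) h.symm
  have hmult := congrArg (emultiplicity q) h
  rw [emultiplicity_mul hq, emultiplicity_mul hq, emultiplicity_mul hq,
    emultiplicity_pow_self_of_prime hq, emultiplicity_pow hq, emultiplicity_pow hq,
    emultiplicity_eq_zero.2 hv, emultiplicity_eq_zero.2 hw,
    (FiniteMultiplicity.of_not_isUnit hq.not_isUnit hr).emultiplicity_eq_multiplicity,
    (FiniteMultiplicity.of_not_isUnit hq.not_isUnit hs).emultiplicity_eq_multiplicity] at hmult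
  have hmult' : p * multiplicity q r = m + p * multiplicity q s := by exact_mod_cast hmult
  exact (Nat.dvd_add_left (dvd_mul_right p _)).1 (hmult' ▸ dvd_mul_right p _)

section FractionRing

variable {R : Type*} [CommRing R] [IsDomain R] [WfDvdMonoid R]
  {K : Type*} [Field K] [Algebra R K] [IsFractionRing R K]

theorem Prime.pow_ne_algebraMap_div {q v w : R} {p m : ℕ} (hq : Prime q) (hp : p ≠ 0)
    (hpm : ¬ p ∣ m) (hv : ¬ q ∣ v) (hw : ¬ q ∣ w) (b : K) :
    b ^ p ≠ algebraMap R K (q ^ m * w) / algebraMap R K v := by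
  intro h
  obtain ⟨r, s, hs, rfl⟩ := IsFractionRing.div_surjective (A := R) b
  have hs0 : s ≠ 0 := nonZeroDivisors.ne_zero hs
  have hv0 : algebraMap R K v ≠ 0 :=
    (map_ne_zero_iff _ (IsFractionRing.injective R K)).2 (by rintro rfl; exact hv (dvd_zero q))
  have hsK : algebraMap R K s ≠ 0 := (map_ne_zero_iff _ (IsFractionRing.injective R K)).2 hs0
  refine hpm (hq.dvd_of_pow_mul_eq_pow_mul_pow (r := r) hp hv hw hs0
    (IsFractionRing.injective R K ?_))
  rw [div_pow, div_eq_div_iff (pow_ne_zero _ hsK) hv0] at h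
  simp only [map_mul, map_pow] at h ⊢
  linear_combination h

theorem Prime.irreducible_X_pow_sub_C_algebraMap_div {q v w : R} {n m : ℕ} (hq : Prime q)
    (hn : Odd n) (hmn : m.Coprime n) (hv : ¬ q ∣ v) (hw : ¬ q ∣ w) :
    Irreducible (Polynomial.X ^ n - Polynomial.C (algebraMap R K (q ^ m * w) / algebraMap R K v)) :=
  X_pow_sub_C_irreducible_of_odd hn fun _p hp hpn ↦ hq.pow_ne_algebraMap_div hp.ne_zero
    (fun hpm ↦ hp.ne_one (Nat.eq_one_of_dvd_coprimes hmn hpm hpn)) hv hw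

end FractionRing

namespace Polynomial

theorem isPrimitive_C_mul_X_pow_add_C {R : Type*} [CommSemiring R] {α β : R} {n : ℕ}
    (hn : n ≠ 0) (h : IsRelPrime α β) : (C α * X ^ n + C β).IsPrimitive := by
  intro r hr
  rw [C_dvd_iff_dvd_coeff] at hr
  exact h (by simpa [hn, coeff_C] using hr n) (by simpa [hn.symm] using hr 0)

variable {R : Type*} [CommRing R] [IsDomain R] [UniqueFactorizationMonoid R]

theorem _root_.Prime.irreducible_C_mul_X_pow_add_C {q α w : R} {n m : ℕ} (hq : Prime q)
    (hn : Odd n) (hmn : m.Coprime n) (hα : ¬ q ∣ α) (hw : ¬ q ∣ w)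
    (hαw : IsRelPrime α (q ^ m * w)) :
    Irreducible (C α * X ^ n + C (q ^ m * w)) := by
  let K := FractionRing R
  rw [(isPrimitive_C_mul_X_pow_add_C hn.pos.ne' hαw).irreducible_iff_irreducible_map_fraction_map
    (K := K)]
  have hα0 : algebraMap R K α ≠ 0 :=
    (map_ne_zero_iff _ (IsFractionRing.injective R K)).2 (by rintro rfl; exact hα (dvd_zero q))
  have hfactor : (C α * X ^ n + C (q ^ m * w)).map (algebraMap R K) =
      C (algebraMap R K α) * (X ^ n - C (algebraMap R K (q ^ m * -w) / algebraMap R K α)) := by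
    rw [mul_sub, ← C_mul, mul_div_cancel₀ _ hα0]
    simp
  rw [hfactor, irreducible_isUnit_mul (isUnit_C.2 hα0.isUnit)]
  exact hq.irreducible_X_pow_sub_C_algebraMap_div hn hmn hα (by rwa [dvd_neg])

end Polynomial

namespace MvPolynomial

variable {R : Type*} [CommSemiring R]

theorem not_X_dvd_C_mul_X_pow {σ : Type*} {i j : σ} (hij : i ≠ j) {c : R} (hc : c ≠ 0) (k : ℕ) :
    ¬ X i ∣ C c * X j ^ k := by
  classical
  intro h
  have := map_dvd (eval fun l ↦ if l = i then (0 : R) else 1) h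
  simp [hij.symm, hc] at this

@[simp]
theorem finSuccEquiv_C {n : ℕ} (r : R) : finSuccEquiv R n (C r) = Polynomial.C (C r) := by
  simp [finSuccEquiv_apply]

@[simp]
theorem finSuccEquiv_X_one {n : ℕ} : finSuccEquiv R (n + 1) (X 1) = Polynomial.C (X 0) :=
  finSuccEquiv_X_succ (j := 0)

@[simp]
theorem finSuccEquiv_X_two {n : ℕ} : finSuccEquiv R (n + 2) (X 2) = Polynomial.C (X 1) :=
  finSuccEquiv_X_succ (j := 1)

end MvPolynomial

-- The right-hand sides have the shape `C α * X ^ n + C (q ^ m * w)` of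
-- `Prime.irreducible_C_mul_X_pow_add_C`, with `q = X 0`.
theorem finSuccEquiv_standard_factor (t u : ℕ) (c : ℂ) :
    finSuccEquiv ℂ 2 (X 1 ^ t + C c * X 0 ^ u * X 2 ^ (t - u)) =
      Polynomial.C (C c * X 1 ^ (t - u)) * Polynomial.X ^ u + Polynomial.C (X 0 ^ t * 1) := by
  simp [finSuccEquiv_X_zero]
  ring

theorem finSuccEquiv_rename_swap_standard_factor (t u : ℕ) (c : ℂ) :
    finSuccEquiv ℂ 2 (rename (Equiv.swap 0 1) (X 1 ^ t + C c * X 0 ^ u * X 2 ^ (t - u))) =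
      Polynomial.C 1 * Polynomial.X ^ t + Polynomial.C (X 0 ^ u * (C c * X 1 ^ (t - u))) := by
  simp [finSuccEquiv_X_zero, Equiv.swap_apply_of_ne_of_ne]
  ring

theorem irreducible_standard_factor_general (t u : ℕ)
    (hgcd : Nat.gcd u t = 1) (c : ℂ) (hc : c ≠ 0) :
    Irreducible (X 1 ^ t + C c * X 0 ^ u * X 2 ^ (t - u) : MvPolynomial (Fin 3) ℂ) := by
  have hx : Prime (X 0 : MvPolynomial (Fin 2) ℂ) := X_prime
  have hxz : ¬ (X 0 : MvPolynomial (Fin 2) ℂ) ∣ C c * X 1 ^ (t - u) :=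
    not_X_dvd_C_mul_X_pow zero_ne_one hc _
  rcases Nat.even_or_odd t with ht | ht
  · have hu : Odd u := (Nat.Coprime.coprime_dvd_right ht.two_dvd hgcd).odd_of_right
    refine (MulEquiv.irreducible_iff (finSuccEquiv ℂ 2)).1 ?_
    rw [finSuccEquiv_standard_factor]
    exact hx.irreducible_C_mul_X_pow_add_C hu (Nat.coprime_comm.1 hgcd) hxz hx.not_dvd_one
      ((hx.irreducible.isRelPrime_iff_not_dvd.2 hxz).pow_left.symm.mul_right isRelPrime_one_right)
  · refine (MulEquiv.irreducible_iff
      ((renameEquiv ℂ (Equiv.swap 0 1)).trans (finSuccEquiv ℂ 2))).1 ?_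
    rw [AlgEquiv.trans_apply, renameEquiv_apply, finSuccEquiv_rename_swap_standard_factor]
    exact hx.irreducible_C_mul_X_pow_add_C ht hgcd hx.not_dvd_one hxz isRelPrime_one_left

/-- For coprime integers `t > u ≥ 1` and `c ≠ 0`, the polynomial
`y^t + c x^u z^{t−u}` is irreducible in `ℂ[x,y,z]`. -/
theorem irreducible_standard_factor (t u : ℕ) (hu : 1 ≤ u) (hut : u < t)
    (hgcd : Nat.gcd u t = 1) (c : ℂ) (hc : c ≠ 0) :
    Irreducible (X 1 ^ t + C c * X 0 ^ u * X 2 ^ (t - u) : MvPolynomial (Fin 3) ℂ) :=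
  irreducible_standard_factor_general t u hgcd c hc
end

section
/- Let f = x^{a₁} y^{a₂} z^{a₃} Π_{q=1}^{m} (y^t + c_q x^u z^{t−u})^{b_q} be in semi-simple standard form with u ≥ 1. Set δ = (u−t) x ∂_x + u z ∂_z, E = x∂_x + y∂_y + z∂_z, and d = deg f. Then the derivation τ = ((a₁(u−t) + a₃u)/d)·E − δ satisfies τ • f = 0, τ is diagonal (hence semi-simple), and trace(τ) = 0 if and only if u(d − 3a₃) = (t−u)(d − 3a₁). -/
open MvPolynomial

noncomputable def Dw (w : Fin 3 → ℂ) (p : MvPolynomial (Fin 3) ℂ) :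
    MvPolynomial (Fin 3) ℂ := ∑ i, C (w i) * X i * pderiv i p

lemma Dw_add (w : Fin 3 → ℂ) (p q : MvPolynomial (Fin 3) ℂ) :
    Dw w (p + q) = Dw w p + Dw w q := by
  simp [Dw, mul_add, Finset.sum_add_distrib]

lemma Dw_mul (w : Fin 3 → ℂ) (p q : MvPolynomial (Fin 3) ℂ) :
    Dw w (p * q) = p * Dw w q + q * Dw w p := by
  simp only [Dw, pderiv_mul, Finset.mul_sum, ← Finset.sum_add_distrib]
  exact Finset.sum_congr rfl fun i _ => by ring

lemma Dw_C (w : Fin 3 → ℂ) (a : ℂ) : Dw w (C a) = 0 := by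
  simp [Dw]

lemma Dw_X (w : Fin 3 → ℂ) (j : Fin 3) : Dw w (X j) = C (w j) * X j := by
  fin_cases j <;>
    simp [Dw, Fin.sum_univ_three, pderiv_X_self, pderiv_X_of_ne, Fin.isValue]

lemma Dw_eig_mul (w : Fin 3 → ℂ) {p q : MvPolynomial (Fin 3) ℂ} {k l : ℂ}
    (hp : Dw w p = C k * p) (hq : Dw w q = C l * q) :
    Dw w (p * q) = C (k + l) * (p * q) := by
  rw [Dw_mul, hp, hq, C_add]; ring

lemma Dw_eig_pow (w : Fin 3 → ℂ) {p : MvPolynomial (Fin 3) ℂ} {k : ℂ}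
    (hp : Dw w p = C k * p) (n : ℕ) :
    Dw w (p ^ n) = C ((n : ℂ) * k) * p ^ n := by
  induction n with
  | zero => simp [Dw]
  | succ n ih =>
      rw [pow_succ, Dw_eig_mul w ih hp]
      push_cast
      ring_nf

lemma Dw_eig_prod (w : Fin 3 → ℂ) {ι : Type*} (s : Finset ι)
    (g : ι → MvPolynomial (Fin 3) ℂ) (k : ι → ℂ)
    (h : ∀ q ∈ s, Dw w (g q) = C (k q) * g q) :
    Dw w (∏ q ∈ s, g q) = C (∑ q ∈ s, k q) * ∏ q ∈ s, g q := by
  classical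
  induction s using Finset.cons_induction with
  | empty => simp [Dw]
  | cons a s' hx ih =>
      rw [Finset.prod_cons, Finset.sum_cons]
      exact Dw_eig_mul w (h a (Finset.mem_cons_self a s'))
        (ih fun q hq => h q (Finset.mem_cons_of_mem hq))

/-- For `f = x^{a₁} y^{a₂} z^{a₃} ∏_q (y^t + c_q x^u z^{t−u})^{b_q}` in
semi-simple standard form with `u ≥ 1`, the diagonal derivation
`τ = ((a₁(u−t)+a₃u)/d) E − δ`, where `δ = (u−t) x∂_x + u z∂_z`, annihilates `f`,
and `τ` is traceless iff `u(d−3a₃) = (t−u)(d−3a₁)`. -/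
theorem tau_annihilates_and_trace (m t u a₁ a₂ a₃ : ℕ) (b : Fin m → ℕ)
    (c : Fin m → ℂ) (hu : 1 ≤ u) (hut : u < t) (hgcd : Nat.gcd u t = 1)
    (hc : ∀ q, c q ≠ 0) (hcinj : Function.Injective c)
    (d : ℕ) (hd : d = a₁ + a₂ + a₃ + t * ∑ q, b q) (hd0 : 0 < d)
    (f : MvPolynomial (Fin 3) ℂ)
    (hf : f = X 0 ^ a₁ * X 1 ^ a₂ * X 2 ^ a₃ *
      ∏ q, (X 1 ^ t + C (c q) * X 0 ^ u * X 2 ^ (t - u)) ^ b q)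
    (κ : ℂ) (hκ : κ = ((a₁ : ℂ) * ((u : ℂ) - (t : ℂ)) + (a₃ : ℂ) * (u : ℂ)) / (d : ℂ))
    (w : Fin 3 → ℂ) (hw : w = ![κ - ((u : ℂ) - (t : ℂ)), κ, κ - (u : ℂ)]) :
    (∑ i, C (w i) * X i * pderiv i f) = 0 ∧
    ((w 0 + w 1 + w 2 = 0) ↔
      (u : ℤ) * ((d : ℤ) - 3 * (a₃ : ℤ)) = ((t : ℤ) - (u : ℤ)) * ((d : ℤ) - 3 * (a₁ : ℤ))) := by
  have hdC : (d : ℂ) ≠ 0 := Nat.cast_ne_zero.mpr hd0.ne'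
  have hκd : κ * (d : ℂ) = (a₁ : ℂ) * ((u : ℂ) - (t : ℂ)) + (a₃ : ℂ) * (u : ℂ) := by
    rw [hκ]; field_simp
  have hw0 : w 0 = κ - ((u : ℂ) - (t : ℂ)) := by rw [hw]; rfl
  have hw1 : w 1 = κ := by rw [hw]; rfl
  have hw2 : w 2 = κ - (u : ℂ) := by rw [hw]; rfl
  have htu : ((t - u : ℕ) : ℂ) = (t : ℂ) - (u : ℂ) := by
    push_cast [Nat.cast_sub hut.le]; ring
  constructor
  · -- annihilation
    show Dw w f = 0
    have hg : ∀ q : Fin m,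
        Dw w (X 1 ^ t + C (c q) * X 0 ^ u * X 2 ^ (t - u)) =
          C ((t : ℂ) * κ) * (X 1 ^ t + C (c q) * X 0 ^ u * X 2 ^ (t - u)) := by
      intro q
      rw [Dw_add]
      have h1 : Dw w (X 1 ^ t : MvPolynomial (Fin 3) ℂ) = C ((t : ℂ) * κ) * X 1 ^ t := by
        rw [Dw_eig_pow w (Dw_X w 1) t, hw1]
      have h2 : Dw w (C (c q) * X 0 ^ u * X 2 ^ (t - u)) =
          C ((t : ℂ) * κ) * (C (c q) * X 0 ^ u * X 2 ^ (t - u)) := by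
        have hC : Dw w (C (c q) : MvPolynomial (Fin 3) ℂ) = C (0 : ℂ) * C (c q) := by
          simp [Dw_C]
        have := Dw_eig_mul w (Dw_eig_mul w hC (Dw_eig_pow w (Dw_X w 0) u))
          (Dw_eig_pow w (Dw_X w 2) (t - u))
        rw [this]
        congr 1
        rw [hw0, hw2, htu]
        ring
      rw [h1, h2, mul_add]
    have hprod : Dw w (∏ q, (X 1 ^ t + C (c q) * X 0 ^ u * X 2 ^ (t - u)) ^ b q) =
        C ((∑ q, (b q : ℂ)) * ((t : ℂ) * κ)) *
          ∏ q, (X 1 ^ t + C (c q) * X 0 ^ u * X 2 ^ (t - u)) ^ b q := by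
      rw [Dw_eig_prod w Finset.univ _ (fun q => (b q : ℂ) * ((t : ℂ) * κ))
        (fun q _ => Dw_eig_pow w (hg q) (b q)), ← Finset.sum_mul]
    have hmono := Dw_eig_mul w (Dw_eig_mul w
      (Dw_eig_pow w (Dw_X w 0) a₁) (Dw_eig_pow w (Dw_X w 1) a₂))
      (Dw_eig_pow w (Dw_X w 2) a₃)
    have htot := Dw_eig_mul w hmono hprod
    rw [hf, htot]
    have hW : (a₁ : ℂ) * w 0 + (a₂ : ℂ) * w 1 + (a₃ : ℂ) * w 2 +
        (∑ q, (b q : ℂ)) * ((t : ℂ) * κ) = 0 := by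
      rw [hw0, hw1, hw2]
      have hsum : (∑ q, (b q : ℂ)) = ((∑ q, b q : ℕ) : ℂ) := by push_cast; rfl
      have hdc : (d : ℂ) = (a₁ : ℂ) + a₂ + a₃ + t * ((∑ q, b q : ℕ) : ℂ) := by
        rw [hd]; push_cast; ring
      rw [hsum]
      have : κ * (d : ℂ) - ((a₁ : ℂ) * ((u : ℂ) - (t : ℂ)) + (a₃ : ℂ) * (u : ℂ)) = 0 := by
        rw [hκd]; ring
      calc (a₁ : ℂ) * (κ - ((u : ℂ) - t)) + (a₂ : ℂ) * κ + (a₃ : ℂ) * (κ - u) +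
            ((∑ q, b q : ℕ) : ℂ) * ((t : ℂ) * κ)
          = κ * (d : ℂ) - ((a₁ : ℂ) * ((u : ℂ) - (t : ℂ)) + (a₃ : ℂ) * (u : ℂ)) := by
            rw [hdc]; ring
        _ = 0 := this
    rw [hW]
    simp
  · -- trace condition
    rw [hw0, hw1, hw2]
    have key : (κ - ((u : ℂ) - t) + κ + (κ - (u : ℂ)) = 0) ↔
        ((3 : ℂ) * ((a₁ : ℂ) * ((u : ℂ) - t) + (a₃ : ℂ) * u) + ((t : ℂ) - 2 * u) * d = 0) := by
      constructor
      · intro h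
        have h' : (κ - ((u : ℂ) - t) + κ + (κ - (u : ℂ))) * (d : ℂ) = 0 := by rw [h]; ring
        calc (3 : ℂ) * ((a₁ : ℂ) * ((u : ℂ) - t) + (a₃ : ℂ) * u) + ((t : ℂ) - 2 * u) * d
            = (κ - ((u : ℂ) - t) + κ + (κ - (u : ℂ))) * (d : ℂ) := by rw [← hκd]; ring
          _ = 0 := h'
      · intro h
        have h' : (κ - ((u : ℂ) - t) + κ + (κ - (u : ℂ))) * (d : ℂ) = 0 := by
          rw [show (κ - ((u : ℂ) - t) + κ + (κ - (u : ℂ))) * (d : ℂ) =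
            (3 : ℂ) * ((a₁ : ℂ) * ((u : ℂ) - t) + (a₃ : ℂ) * u) + ((t : ℂ) - 2 * u) * d by
              rw [← hκd]; ring]
          exact h
        exact (mul_eq_zero.mp h').resolve_right hdC
    rw [key]
    have cast_eq : ((3 : ℂ) * ((a₁ : ℂ) * ((u : ℂ) - t) + (a₃ : ℂ) * u) + ((t : ℂ) - 2 * u) * d)
        = (((3 * ((a₁ : ℤ) * ((u : ℤ) - t) + (a₃ : ℤ) * u) + ((t : ℤ) - 2 * u) * d : ℤ)) : ℂ) := by
      push_cast; ring
    rw [cast_eq]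
    rw [show ((((3 * ((a₁ : ℤ) * ((u : ℤ) - t) + (a₃ : ℤ) * u) + ((t : ℤ) - 2 * u) * d : ℤ)) : ℂ) = 0)
      ↔ ((3 * ((a₁ : ℤ) * ((u : ℤ) - t) + (a₃ : ℤ) * u) + ((t : ℤ) - 2 * u) * d : ℤ) = 0) from
      Int.cast_eq_zero]
    constructor
    · intro h; linear_combination -h
    · intro h; linear_combination -h
end

section
/- With N, ν, N′, ν′, d as in the semi-simple standard form setting (N = tu·Σbᵢ + ta₁ + ua₂, ν = t+u, N′ = t(t−u)·Σbᵢ + ta₃ + (t−u)a₂, ν′ = 2t−u, d = a₁+a₂+a₃+tΣbᵢ > 0), the following are equivalent: (a) u(d − 3a₃) ≠ (t−u)(d − 3a₁); (b) ν/N ≠ 3/d; (c) ν′/N′ ≠ 3/d. -/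
/-- With `N = tu Σbᵢ + ta₁ + ua₂`, `ν = t+u`, `N′ = t(t−u) Σbᵢ + ta₃ + (t−u)a₂`,
`ν′ = 2t−u`, `d = a₁+a₂+a₃+t Σbᵢ > 0`, `N, N′ > 0`, the following are equivalent:
(a) `u(d−3a₃) ≠ (t−u)(d−3a₁)`; (b) `ν/N ≠ 3/d`; (c) `ν′/N′ ≠ 3/d`. -/
theorem nonTraceless_iff_birational (t u m a₁ a₂ a₃ : ℕ) (b : Fin m → ℕ)
    (htu : u < t) (hu : 1 ≤ u)
    (d N N' : ℕ)
    (hd : d = a₁ + a₂ + a₃ + t * ∑ i, b i) (hd0 : 0 < d)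
    (hN : N = t * u * (∑ i, b i) + t * a₁ + u * a₂) (hN0 : 0 < N)
    (hN' : N' = t * (t - u) * (∑ i, b i) + t * a₃ + (t - u) * a₂) (hN'0 : 0 < N') :
    (((u : ℤ) * ((d : ℤ) - 3 * (a₃ : ℤ)) ≠ ((t : ℤ) - (u : ℤ)) * ((d : ℤ) - 3 * (a₁ : ℤ))) ↔
      (((t + u : ℕ) : ℚ) / (N : ℚ) ≠ 3 / (d : ℚ))) ∧
    ((((t + u : ℕ) : ℚ) / (N : ℚ) ≠ 3 / (d : ℚ)) ↔
      (((2 * t - u : ℕ) : ℚ) / (N' : ℚ) ≠ 3 / (d : ℚ))) := by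
  have hdq : (d : ℚ) = a₁ + a₂ + a₃ + t * ∑ i, (b i : ℚ) := by
    rw [hd]; push_cast; ring
  have hNq : (N : ℚ) = t * u * (∑ i, (b i : ℚ)) + t * a₁ + u * a₂ := by
    rw [hN]; push_cast; ring
  have hN'q : (N' : ℚ) = t * ((t : ℚ) - u) * (∑ i, (b i : ℚ)) + t * a₃ + ((t : ℚ) - u) * a₂ := by
    rw [hN']; push_cast [Nat.cast_sub htu.le]; ring
  have hd0' : (d : ℚ) ≠ 0 := Nat.cast_ne_zero.2 hd0.ne'
  have hN0' : (N : ℚ) ≠ 0 := Nat.cast_ne_zero.2 hN0.ne'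
  have hN'0' : (N' : ℚ) ≠ 0 := Nat.cast_ne_zero.2 hN'0.ne'
  -- the key identity
  have id1 : (u : ℚ) * ((d : ℚ) - 3 * a₃) - ((t : ℚ) - u) * ((d : ℚ) - 3 * a₁)
      = 3 * N - ((t : ℚ) + u) * d := by rw [hdq, hNq]; ring
  have id2 : (u : ℚ) * ((d : ℚ) - 3 * a₃) - ((t : ℚ) - u) * ((d : ℚ) - 3 * a₁)
      = (2 * (t : ℚ) - u) * d - 3 * N' := by rw [hdq, hN'q]; ring
  have eint : ((u : ℤ) * ((d : ℤ) - 3 * (a₃ : ℤ)) = ((t : ℤ) - (u : ℤ)) * ((d : ℤ) - 3 * (a₁ : ℤ)))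
      ↔ ((u : ℚ) * ((d : ℚ) - 3 * a₃) = ((t : ℚ) - u) * ((d : ℚ) - 3 * a₁)) := by
    constructor <;> intro h <;> exact_mod_cast h
  have eb : (((t + u : ℕ) : ℚ) / (N : ℚ) = 3 / (d : ℚ))
      ↔ ((u : ℚ) * ((d : ℚ) - 3 * a₃) = ((t : ℚ) - u) * ((d : ℚ) - 3 * a₁)) := by
    rw [div_eq_div_iff hN0' hd0', ← sub_eq_zero, ← sub_eq_zero (b := ((t:ℚ) - u) * _)]
    push_cast
    rw [id1]
    constructor <;> intro h <;> linarith
  have ec : (((2 * t - u : ℕ) : ℚ) / (N' : ℚ) = 3 / (d : ℚ))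
      ↔ ((u : ℚ) * ((d : ℚ) - 3 * a₃) = ((t : ℚ) - u) * ((d : ℚ) - 3 * a₁)) := by
    rw [div_eq_div_iff hN'0' hd0', ← sub_eq_zero, ← sub_eq_zero (b := ((t:ℚ) - u) * _)]
    push_cast [Nat.cast_sub (show u ≤ 2 * t by omega)]
    rw [id2]
  exact ⟨not_congr (eint.trans eb.symm), not_congr (eb.trans ec.symm)⟩
end
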